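/- arXiv:2605.01747 — 3 statements merged into one kernel-verified Lean document; each statement's English description precedes it below -/
import Mathlib

section
/- For every nonnegative integer n and elements q, z, the sum over j from 0 to n of [n choose j]_q * (-1)^j * q^(C(j,2)) * z^j equals the product (z;q)_n = prod_{i=0}^{n-1} (1 - z q^i). (Terminating q-binomial theorem.) -/
/-!
Pascal's rule `[n+1, j] = q^j [n, j] + [n, j-1]` splits the sum for `n + 1` into two sums for `n`,
both evaluated at `z q`; the second one is the first shifted by one index, which costs a factor
`-z` because `C(j+1, 2) = C(j, 2) + j`. Hence the sum `S_n(z)` satisfies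
`S_{n+1}(z) = (1 - z) S_n(z q)`, the recursion of `(z; q)_n`.
-/

open Finset

/-- Gaussian binomial coefficient `[n choose r]_q`, defined via the q-Pascal
recurrence, with the convention that it is `0` when `r < 0` or `r > n`. -/
def qbinom {K : Type*} [CommRing K] (q : K) : ℕ → ℤ → K
  | 0, r => if r = 0 then 1 else 0
  | n + 1, r => q ^ r.toNat * qbinom q n r + qbinom q n (r - 1)

section

variable {K : Type*} [CommRing K]

theorem qbinom_of_neg (q : K) : ∀ (n : ℕ) {r : ℤ}, r < 0 → qbinom q n r = 0
  | 0, r, h => if_neg h.ne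
  | n + 1, r, h => by
    rw [qbinom, qbinom_of_neg q n h, qbinom_of_neg q n (by omega), mul_zero, add_zero]

theorem qbinom_of_lt (q : K) : ∀ (n : ℕ) {r : ℤ}, (n : ℤ) < r → qbinom q n r = 0
  | 0, r, h => if_neg (by omega)
  | n + 1, r, h => by
    rw [qbinom, qbinom_of_lt q n (by omega), qbinom_of_lt q n (by omega), mul_zero, add_zero]

theorem sum_qbinom_succ (q z : K) (n : ℕ) :
    ∑ j ∈ range (n + 2), qbinom q (n + 1) j * (-1) ^ j * q ^ j.choose 2 * z ^ j =
      (1 - z) * ∑ j ∈ range (n + 1), qbinom q n j * (-1) ^ j * q ^ j.choose 2 * (z * q) ^ j := by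
  set S := ∑ j ∈ range (n + 1), qbinom q n j * (-1) ^ j * q ^ j.choose 2 * (z * q) ^ j
  have h_diag : ∑ j ∈ range (n + 2),
      q ^ j * qbinom q n j * (-1) ^ j * q ^ j.choose 2 * z ^ j = S := by
    rw [sum_range_succ, qbinom_of_lt q n (by omega), mul_zero, zero_mul, zero_mul, zero_mul,
      add_zero]
    exact sum_congr rfl fun j _ => by ring
  have h_shift : ∑ j ∈ range (n + 2),
      qbinom q n (j - 1) * (-1) ^ j * q ^ j.choose 2 * z ^ j = -z * S := by
    rw [sum_range_succ', Nat.cast_zero, zero_sub, qbinom_of_neg q n (by omega), zero_mul,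
      zero_mul, zero_mul, add_zero, mul_sum]
    refine sum_congr rfl fun j _ => ?_
    rw [Nat.cast_succ, add_sub_cancel_right, Nat.choose_succ_succ', Nat.choose_one_right]
    ring
  simp only [qbinom, Int.toNat_natCast, add_mul, sum_add_distrib, h_diag, h_shift]
  ring

end

/-- Terminating q-binomial theorem. -/
theorem stmt_1 {K : Type*} [CommRing K] (q z : K) (n : ℕ) :
    ∑ j ∈ Finset.range (n + 1),
      qbinom q n j * (-1 : K) ^ j * q ^ (j.choose 2) * z ^ j =
      ∏ i ∈ Finset.range n, (1 - z * q ^ i) := by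
  induction n generalizing z with
  | zero => simp [qbinom]
  | succ n ih =>
    rw [sum_qbinom_succ, ih, prod_range_succ', pow_zero, mul_one, mul_comm]
    simp only [pow_succ', mul_left_comm z q, mul_assoc]
end

section
/- Define S_2(n) = q^{-n} * sum over all integers k of q^{3k^2 + k - 3kn} * [n choose 3k+1-n]_q and S_3(n) = sum over all integers k of q^{3k^2 - k - 3kn} * [n choose 3k-1-n]_q, where the q-binomial [n choose r]_q is zero if r < 0 or r > n. Then S_2(n) = S_3(n) for every nonnegative integer n. -/
/-! The substitution `k ↦ n - k` matches the two sums term by term: by the symmetry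
`[n choose r]_q = [n choose n - r]_q` the binomials agree, and the exponents of `q` differ by
exactly `n`. The symmetry follows by induction on `n` from the q-Pascal recurrence together with
its dual form `[n+1 choose r]_q = [n choose r]_q + q^(n+1-r) [n choose r-1]_q`. -/

section

variable {K : Type*} [CommRing K] (q : K)

lemma qbinom_succ (n : ℕ) (r : ℤ) :
    qbinom q (n + 1) r = q ^ r.toNat * qbinom q n r + qbinom q n (r - 1) :=
  rfl

lemma qbinom_eq_zero_of_neg :
    ∀ (n : ℕ) {r : ℤ}, r < 0 → qbinom q n r = 0
  | 0, r, hr => by simp [qbinom, hr.ne]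
  | n + 1, r, hr => by
    rw [qbinom_succ, qbinom_eq_zero_of_neg n hr, qbinom_eq_zero_of_neg n (by omega)]
    ring

lemma qbinom_eq_zero_of_lt :
    ∀ (n : ℕ) {r : ℤ}, (n : ℤ) < r → qbinom q n r = 0
  | 0, r, hr => by simp [qbinom]; omega
  | n + 1, r, hr => by
    rw [qbinom_succ, qbinom_eq_zero_of_lt n (by omega), qbinom_eq_zero_of_lt n (by omega)]
    ring

lemma qbinom_succ' :
    ∀ (n : ℕ) (r : ℤ),
      qbinom q (n + 1) r = qbinom q n r + q ^ ((n : ℤ) + 1 - r).toNat * qbinom q n (r - 1)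
  | 0, r => by
    rcases eq_or_ne r 0 with rfl | h0
    · simp [qbinom]
    rcases eq_or_ne r 1 with rfl | h1
    · simp [qbinom]
    · simp [qbinom, h0, h1, sub_eq_zero]
  | n + 1, r => by
    -- The two expansions differ only in the coefficient of `qbinom q n (r - 1)`, and both
    -- coefficients equal `q ^ (n + 1)` whenever that term is nonzero.
    have key : q ^ r.toNat * q ^ ((n : ℤ) + 1 - r).toNat * qbinom q n (r - 1) =
        q ^ ((n : ℤ) + 2 - r).toNat * q ^ (r - 1).toNat * qbinom q n (r - 1) := by
      rcases lt_or_ge (r - 1) 0 with h | h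
      · simp [qbinom_eq_zero_of_neg q n h]
      rcases lt_or_ge (n : ℤ) (r - 1) with h' | h'
      · simp [qbinom_eq_zero_of_lt q n h']
      · rw [← pow_add, ← pow_add]
        congr 2
        omega
    conv_lhs => rw [qbinom_succ, qbinom_succ' n, qbinom_succ' n]
    conv_rhs => rw [qbinom_succ q n, qbinom_succ q n]
    push_cast
    rw [show (n : ℤ) + 1 - (r - 1) = n + 2 - r by ring,
      show (n : ℤ) + 1 + 1 - r = n + 2 - r by ring]
    linear_combination key

lemma qbinom_symm :
    ∀ (n : ℕ) (r : ℤ), qbinom q n (n - r) = qbinom q n r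
  | 0, r => by simp [qbinom]
  | n + 1, r => by
    rw [qbinom_succ', qbinom_succ]
    push_cast
    rw [show (n : ℤ) + 1 - r - 1 = n - r by ring, show (n : ℤ) + 1 - r = n - (r - 1) by ring,
      qbinom_symm n r, qbinom_symm n (r - 1), show (n : ℤ) + 1 - (n - (r - 1)) = r by ring]
    ring

end

theorem stmt_2 {K : Type*} [Field K] (q : K) (hq : q ≠ 0) (n : ℕ) :
    q ^ (-(n : ℤ)) *
      ∑ᶠ k : ℤ, q ^ (3 * k ^ 2 + k - 3 * k * n) * qbinom q n (3 * k + 1 - n) =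
      ∑ᶠ k : ℤ, q ^ (3 * k ^ 2 - k - 3 * k * n) * qbinom q n (3 * k - 1 - n) := by
  rw [mul_finsum]
  refine finsum_eq_of_bijective (fun k : ℤ => n - k) (Equiv.subLeft (n : ℤ)).bijective
    fun k => ?_
  rw [show 3 * ((n : ℤ) - k) - 1 - n = n - (3 * k + 1 - n) by ring, qbinom_symm,
    ← mul_assoc, ← zpow_add₀ hq]
  ring_nf
end

section
/- Let omega satisfy omega^2 + omega + 1 = 0 in a field of characteristic zero containing q (with q transcendental or generic), and define g(j1,j2,j3) = 2*j2 + j3 if j2 + 2*j3 ≡ 2 (mod 3) and g(j1,j2,j3) = j2 + 2*j3 otherwise. Then for every positive integer m, the sum over triples (j1,j2,j3) of nonnegative integers with j1+j2+j3 = 3m of q^{(1/3)(C(j1,2)+C(j2,2)+C(j3,2) - g(j1,j2,j3))} * [3m choose j1,j2,j3]_q * omega^{j2+2*j3} equals 0; and for m = 0 the sum equals 1. -/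
/-- The q-shifted factorial `(a;q)_k = ∏_{i=0}^{k-1} (1 - a qⁱ)`. -/
def qPoch {K : Type*} [CommRing K] (q a : K) (k : ℕ) : K :=
  ∏ i ∈ Finset.range k, (1 - a * q ^ i)

/-- The q-multinomial coefficient `[n choose j1, j2, j3]_q` (for `j1+j2+j3 = n`),
defined as `(q;q)_n / ((q;q)_{j1} (q;q)_{j2} (q;q)_{j3})`. -/
noncomputable def qmul3 {K : Type*} [Field K] (q : K) (n j1 j2 j3 : ℕ) : K :=
  qPoch q q n / (qPoch q q j1 * qPoch q q j2 * qPoch q q j3)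

/-!
Adjoin a cube root `p` of `q`, so that `q = p³`. The sums
`T n x y z = ∑ x^j₁ y^j₂ z^j₃ p^(C(j₁,2) + C(j₂,2) + C(j₃,2)) [n; j₁, j₂, j₃]_{p³}`
are symmetric in `x, y, z`, homogeneous of degree `n`, and satisfy a three-term
Pascal recursion. One step of that recursion turns `T (3m) p² (ω²p) ω` and
`ω² T (3m) p² (ωp) ω²` into sums in which two of the three arguments agree up to a
power of `ω`; for those the twist by `ω` is undone by symmetry and homogeneity.
Sorting the summands by `j₂ + 2 j₃ mod 3` (the class `2` is carried onto the class `1`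
by swapping `j₂` and `j₃`), the difference of the two sums is `p^(6m) (1 - ω²)` times
the sum of the theorem.
-/

open Finset

lemma Transcendental.not_isOfFinOrder {R A : Type*} [CommRing R] [Nontrivial R] [Ring A]
    [Algebra R A] {x : A} (hx : Transcendental R x) : ¬IsOfFinOrder x := fun h => by
  obtain ⟨n, hn, hxn⟩ := isOfFinOrder_iff_pow_eq_one.mp h
  exact hx ⟨Polynomial.X ^ n - 1, Polynomial.X_pow_sub_C_ne_zero hn 1, by simp [hxn]⟩

lemma Nat.succ_choose_two (k : ℕ) : (k + 1).choose 2 = k + k.choose 2 := by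
  rw [Nat.choose_succ_succ', Nat.choose_one_right]

section QPochhammer

variable {R : Type*} [CommRing R] {q : R}

lemma qPoch_succ (q : R) (n : ℕ) : qPoch q q (n + 1) = qPoch q q n * (1 - q ^ (n + 1)) := by
  rw [qPoch, qPoch, prod_range_succ, ← pow_succ']

lemma one_sub_pow_ne_zero (hq : ¬IsOfFinOrder q) {n : ℕ} (hn : n ≠ 0) : 1 - q ^ n ≠ 0 :=
  sub_ne_zero.mpr fun h =>
    hq (isOfFinOrder_iff_pow_eq_one.mpr ⟨n, Nat.pos_of_ne_zero hn, h.symm⟩)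

lemma qPoch_ne_zero [IsDomain R] (hq : ¬IsOfFinOrder q) (n : ℕ) : qPoch q q n ≠ 0 := by
  induction n with
  | zero => simp [qPoch]
  | succ n ih => rw [qPoch_succ]; exact mul_ne_zero ih (one_sub_pow_ne_zero hq n.add_one_ne_zero)

end QPochhammer

section QMultinomial

variable {K : Type*} [Field K] {q : K}

lemma qmul3_comm12 (q : K) (n a b c : ℕ) : qmul3 q n b a c = qmul3 q n a b c := by
  rw [qmul3, qmul3, mul_comm (qPoch q q b)]

lemma qmul3_comm23 (q : K) (n a b c : ℕ) : qmul3 q n a c b = qmul3 q n a b c := by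
  rw [qmul3, qmul3, mul_right_comm]

lemma qmul3_comm13 (q : K) (n a b c : ℕ) : qmul3 q n c b a = qmul3 q n a b c := by
  rw [qmul3_comm12, qmul3_comm23, qmul3_comm12]

lemma one_sub_pow_mul_qmul3_succ_fst (hq : ¬IsOfFinOrder q) (n a b c : ℕ) :
    (1 - q ^ (a + 1)) * qmul3 q (n + 1) (a + 1) b c = (1 - q ^ (n + 1)) * qmul3 q n a b c := by
  have := qPoch_ne_zero hq a
  have := qPoch_ne_zero hq b
  have := qPoch_ne_zero hq c
  have := one_sub_pow_ne_zero hq a.succ_ne_zero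
  rw [qmul3, qmul3, qPoch_succ, qPoch_succ]
  field_simp

lemma one_sub_pow_mul_qmul3_succ_snd (hq : ¬IsOfFinOrder q) (n a b c : ℕ) :
    (1 - q ^ (b + 1)) * qmul3 q (n + 1) a (b + 1) c = (1 - q ^ (n + 1)) * qmul3 q n a b c := by
  rw [← qmul3_comm12, one_sub_pow_mul_qmul3_succ_fst hq, qmul3_comm12]

lemma one_sub_pow_mul_qmul3_succ_thd (hq : ¬IsOfFinOrder q) (n a b c : ℕ) :
    (1 - q ^ (c + 1)) * qmul3 q (n + 1) a b (c + 1) = (1 - q ^ (n + 1)) * qmul3 q n a b c := by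
  rw [← qmul3_comm13, one_sub_pow_mul_qmul3_succ_fst hq, qmul3_comm13]

lemma map_qmul3 {L : Type*} [Field L] (φ : K →+* L) (n a b c : ℕ) :
    φ (qmul3 q n a b c) = qmul3 (φ q) n a b c := by
  simp [qmul3, qPoch, map_prod]

end QMultinomial

namespace QTrinomial

def triples (n : ℕ) : Finset (ℕ × ℕ × ℕ) :=
  (range (n + 1) ×ˢ range (n + 1) ×ˢ range (n + 1)).filter
    (fun j => j.1 + j.2.1 + j.2.2 = n)

@[simp]
lemma mem_triples {n : ℕ} {j : ℕ × ℕ × ℕ} :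
    j ∈ triples n ↔ j.1 + j.2.1 + j.2.2 = n := by
  simp only [triples, mem_filter, mem_product, mem_range, and_iff_right_iff_imp]
  omega

section Sums

variable {M : Type*} [AddCommMonoid M]

lemma sum_triples_comp_involutive (n : ℕ) {σ : ℕ × ℕ × ℕ → ℕ × ℕ × ℕ}
    (hσ : Function.Involutive σ)
    (hsum : ∀ j, (σ j).1 + (σ j).2.1 + (σ j).2.2 = j.1 + j.2.1 + j.2.2)
    (f : ℕ × ℕ × ℕ → M) :
    ∑ j ∈ triples n, f (σ j) = ∑ j ∈ triples n, f j :=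
  sum_nbij' σ σ (by simp [hsum]) (by simp [hsum]) (fun j _ => hσ j) (fun j _ => hσ j)
    (fun _ _ => rfl)

lemma sum_triples_succ_of_fst_eq_zero (n : ℕ) {g : ℕ × ℕ × ℕ → M}
    (hg : ∀ b c, g (0, b, c) = 0) :
    ∑ j ∈ triples (n + 1), g j = ∑ j ∈ triples n, g (j.1 + 1, j.2.1, j.2.2) := by
  rw [← sum_filter_of_ne (p := fun j => j.1 ≠ 0) fun ⟨a, b, c⟩ _ hj h0 => hj (by
    simp only at h0
    simp [h0, hg])]
  refine sum_nbij' (fun j => (j.1 - 1, j.2.1, j.2.2)) (fun j => (j.1 + 1, j.2.1, j.2.2))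
    ?_ ?_ ?_ (fun _ _ => rfl) ?_ <;> rintro ⟨a, b, c⟩ h <;>
    simp only [mem_filter, mem_triples] at h ⊢
  · omega
  · omega
  · rw [Nat.sub_add_cancel (Nat.pos_of_ne_zero h.2)]
  · rw [Nat.sub_add_cancel (Nat.pos_of_ne_zero h.2)]

lemma sum_triples_succ_of_snd_eq_zero (n : ℕ) {g : ℕ × ℕ × ℕ → M}
    (hg : ∀ a c, g (a, 0, c) = 0) :
    ∑ j ∈ triples (n + 1), g j = ∑ j ∈ triples n, g (j.1, j.2.1 + 1, j.2.2) := by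
  have swap (k : ℕ) (f : ℕ × ℕ × ℕ → M) :=
    sum_triples_comp_involutive k (σ := fun j => (j.2.1, j.1, j.2.2)) (fun _ => rfl)
      (fun _ => by dsimp only; omega) f
  rw [← swap, sum_triples_succ_of_fst_eq_zero n fun b c => hg b c, ← swap]

lemma sum_triples_succ_of_thd_eq_zero (n : ℕ) {g : ℕ × ℕ × ℕ → M}
    (hg : ∀ a b, g (a, b, 0) = 0) :
    ∑ j ∈ triples (n + 1), g j = ∑ j ∈ triples n, g (j.1, j.2.1, j.2.2 + 1) := by
  have swap (k : ℕ) (f : ℕ × ℕ × ℕ → M) :=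
    sum_triples_comp_involutive k (σ := fun j => (j.2.2, j.2.1, j.1)) (fun _ => rfl)
      (fun _ => by dsimp only; omega) f
  rw [← swap, sum_triples_succ_of_fst_eq_zero n fun b a => hg a b, ← swap]

end Sums

section TrinomialSum

variable {L : Type*} [Field L] (p : L)

noncomputable def trinomialTerm (n : ℕ) (x y z : L) (j : ℕ × ℕ × ℕ) : L :=
  x ^ j.1 * y ^ j.2.1 * z ^ j.2.2 * p ^ (j.1.choose 2 + j.2.1.choose 2 + j.2.2.choose 2) *
    qmul3 (p ^ 3) n j.1 j.2.1 j.2.2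

noncomputable def trinomialSum (n : ℕ) (x y z : L) : L :=
  ∑ j ∈ triples n, trinomialTerm p n x y z j

lemma trinomialSum_comm12 (n : ℕ) (x y z : L) :
    trinomialSum p n y x z = trinomialSum p n x y z := by
  rw [trinomialSum, ← sum_triples_comp_involutive n (σ := fun j => (j.2.1, j.1, j.2.2))
    (fun _ => rfl) (fun _ => by dsimp only; omega)]
  refine sum_congr rfl fun j _ => ?_
  simp only [trinomialTerm, qmul3_comm12]
  ring

lemma trinomialSum_comm23 (n : ℕ) (x y z : L) :
    trinomialSum p n x z y = trinomialSum p n x y z := by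
  rw [trinomialSum, ← sum_triples_comp_involutive n (σ := fun j => (j.1, j.2.2, j.2.1))
    (fun _ => rfl) (fun _ => by dsimp only; omega)]
  refine sum_congr rfl fun j _ => ?_
  simp only [trinomialTerm, qmul3_comm23]
  ring

lemma trinomialSum_comm13 (n : ℕ) (x y z : L) :
    trinomialSum p n z y x = trinomialSum p n x y z := by
  rw [trinomialSum, ← sum_triples_comp_involutive n (σ := fun j => (j.2.2, j.2.1, j.1))
    (fun _ => rfl) (fun _ => by dsimp only; omega)]
  refine sum_congr rfl fun j _ => ?_
  simp only [trinomialTerm, qmul3_comm13]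
  ring

lemma trinomialSum_mul (n : ℕ) (c x y z : L) :
    trinomialSum p n (c * x) (c * y) (c * z) = c ^ n * trinomialSum p n x y z := by
  rw [trinomialSum, trinomialSum, mul_sum]
  refine sum_congr rfl fun j hj => ?_
  rw [← mem_triples.mp hj]
  simp only [trinomialTerm]
  ring

lemma trinomialSum_succ (hq : ¬IsOfFinOrder (p ^ 3)) (n : ℕ) (x y z : L) :
    trinomialSum p (n + 1) x y z =
      x * trinomialSum p n (p * x) (p ^ 3 * y) (p ^ 3 * z) +
        y * trinomialSum p n x (p * y) (p ^ 3 * z) + z * trinomialSum p n x y (p * z) := by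
  refine mul_left_cancel₀ (one_sub_pow_ne_zero hq n.add_one_ne_zero) ?_
  -- For `j₁ + j₂ + j₃ = n + 1`: `1 - qⁿ⁺¹ = q^(j₂+j₃) (1 - q^j₁) + q^j₃ (1 - q^j₂) + (1 - q^j₃)`,
  -- and the `i`-th piece vanishes where `jᵢ = 0`, so it can be shifted down to `n`.
  calc (1 - (p ^ 3) ^ (n + 1)) * trinomialSum p (n + 1) x y z
      = ∑ j ∈ triples (n + 1), (p ^ 3) ^ (j.2.1 + j.2.2) * (1 - (p ^ 3) ^ j.1) *
            trinomialTerm p (n + 1) x y z j +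
          ∑ j ∈ triples (n + 1), (p ^ 3) ^ j.2.2 * (1 - (p ^ 3) ^ j.2.1) *
            trinomialTerm p (n + 1) x y z j +
          ∑ j ∈ triples (n + 1), (1 - (p ^ 3) ^ j.2.2) * trinomialTerm p (n + 1) x y z j := by
        rw [trinomialSum, mul_sum, ← sum_add_distrib, ← sum_add_distrib]
        refine sum_congr rfl fun j hj => ?_
        rw [← mem_triples.mp hj]
        ring
    _ = _ := by
        rw [sum_triples_succ_of_fst_eq_zero n (by simp),
          sum_triples_succ_of_snd_eq_zero n (by simp),
          sum_triples_succ_of_thd_eq_zero n (by simp), mul_add, mul_add, trinomialSum,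
          trinomialSum, trinomialSum, mul_sum, mul_sum, mul_sum, mul_sum, mul_sum, mul_sum]
        congr 1; congr 1
        all_goals refine sum_congr rfl fun j _ => ?_
        · simp only [trinomialTerm, Nat.succ_choose_two]
          linear_combination (p ^ 3) ^ (j.2.1 + j.2.2) * x ^ (j.1 + 1) * y ^ j.2.1 * z ^ j.2.2 *
            p ^ (j.1 + j.1.choose 2 + j.2.1.choose 2 + j.2.2.choose 2) *
            one_sub_pow_mul_qmul3_succ_fst hq n j.1 j.2.1 j.2.2
        · simp only [trinomialTerm, Nat.succ_choose_two]
          linear_combination (p ^ 3) ^ j.2.2 * x ^ j.1 * y ^ (j.2.1 + 1) * z ^ j.2.2 *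
            p ^ (j.1.choose 2 + (j.2.1 + j.2.1.choose 2) + j.2.2.choose 2) *
            one_sub_pow_mul_qmul3_succ_snd hq n j.1 j.2.1 j.2.2
        · simp only [trinomialTerm, Nat.succ_choose_two]
          linear_combination x ^ j.1 * y ^ j.2.1 * z ^ (j.2.2 + 1) *
            p ^ (j.1.choose 2 + j.2.1.choose 2 + (j.2.2 + j.2.2.choose 2)) *
            one_sub_pow_mul_qmul3_succ_thd hq n j.1 j.2.1 j.2.2

variable {p}

section CubeRootOfUnity

variable {ω : L} (hω : ω ^ 3 = 1)
include hω

lemma pow_mul_trinomialSum_twist_of_fst_eq_snd (n : ℕ) (a c : L) :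
    ω ^ n * trinomialSum p n a (ω ^ 2 * a) (ω * c) =
      trinomialSum p n a (ω * a) (ω ^ 2 * c) := by
  rw [← trinomialSum_mul, ← trinomialSum_comm12]
  congr 1
  · linear_combination a * hω
  · ring

lemma pow_mul_trinomialSum_twist_of_fst_eq_thd (n : ℕ) (a b : L) :
    ω ^ (2 * n) * trinomialSum p n a (ω ^ 2 * b) (ω * a) =
      trinomialSum p n a (ω * b) (ω ^ 2 * a) := by
  rw [pow_mul, ← trinomialSum_mul, ← trinomialSum_comm13]
  congr 1
  · linear_combination a * hω
  · linear_combination ω * b * hω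

lemma trinomialSum_twist (hq : ¬IsOfFinOrder (p ^ 3)) {m : ℕ} (hm : m ≠ 0) :
    trinomialSum p (3 * m) (p ^ 2) (ω ^ 2 * p) ω =
      ω ^ 2 * trinomialSum p (3 * m) (p ^ 2) (ω * p) (ω ^ 2) := by
  obtain ⟨N, hN⟩ : ∃ N, 3 * m = N + 1 := ⟨3 * m - 1, by omega⟩
  have hωN : ω ^ N = ω ^ 2 := by
    have : ω ^ (N + 1) = 1 := by rw [← hN, pow_mul, hω, one_pow]
    linear_combination ω ^ 2 * this - ω ^ N * hω
  have h1 := pow_mul_trinomialSum_twist_of_fst_eq_thd (p := p) hω N (p ^ 3) (p ^ 4)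
  have h2 := pow_mul_trinomialSum_twist_of_fst_eq_snd (p := p) hω N (p ^ 2) (p ^ 3)
  have h3 := trinomialSum_comm23 p N (p ^ 2) (ω * p) (ω ^ 2 * p)
  rw [hN, trinomialSum_succ p hq, trinomialSum_succ p hq]
  rw [pow_mul', hωN] at h1
  rw [hωN] at h2
  ring_nf at h1 h2 h3 ⊢
  rw [← h1, ← h2, ← h3]
  ring_nf
  rw [show ω ^ 4 = ω by linear_combination ω * hω,
    show ω ^ 5 = ω ^ 2 by linear_combination ω ^ 2 * hω,
    show ω ^ 6 = 1 by linear_combination (ω ^ 3 + 1) * hω]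
  ring

end CubeRootOfUnity

end TrinomialSum

section Reduction

variable {L : Type*} [Field L] {p ω : L}

def exponentShift (j : ℕ × ℕ × ℕ) : ℤ :=
  if ((j.2.1 : ℤ) + 2 * j.2.2) % 3 = 2 then 2 * (j.2.1 : ℤ) + j.2.2
  else (j.2.1 : ℤ) + 2 * j.2.2

lemma natCast_choose_two_zmod_three (k : ℕ) : (k.choose 2 : ZMod 3) = 2 * k * (k - 1) := by
  induction k with
  | zero => simp
  | succ k ih =>
    rw [Nat.succ_choose_two]
    have h3 : (3 : ZMod 3) = 0 := rfl
    push_cast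
    linear_combination ih - (k : ZMod 3) * h3

lemma three_dvd_sub_exponentShift {j : ℕ × ℕ × ℕ} (h : 3 ∣ j.1 + j.2.1 + j.2.2) :
    (3 : ℤ) ∣ (j.1.choose 2 : ℤ) + j.2.1.choose 2 + j.2.2.choose 2 - exponentShift j := by
  obtain ⟨a, b, c⟩ := j
  have hsum : (a + b + c : ZMod 3) = 0 := by exact_mod_cast (ZMod.natCast_eq_zero_iff _ _).mpr h
  have hcond : ((b : ℤ) + 2 * c) % 3 = 2 ↔ (b + 2 * c : ZMod 3) = 2 := by
    rw [show (b + 2 * c : ZMod 3) = (((b : ℤ) + 2 * c : ℤ) : ZMod 3) by push_cast; rfl,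
      show (2 : ZMod 3) = ((2 : ℤ) : ZMod 3) from rfl, ZMod.intCast_eq_intCast_iff']
    rfl
  apply (ZMod.intCast_zmod_eq_zero_iff_dvd _ 3).mp
  rw [exponentShift]
  split_ifs with hc <;> rw [hcond] at hc <;> push_cast [natCast_choose_two_zmod_three] <;>
    revert hc hsum <;> generalize (a : ZMod 3) = u <;> generalize (b : ZMod 3) = v <;>
    generalize (c : ZMod 3) = w <;> revert u v w <;> decide

noncomputable def reducedTerm (p : L) (n : ℕ) (j : ℕ × ℕ × ℕ) : L :=
  p ^ ((j.1.choose 2 : ℤ) + (j.2.1.choose 2 : ℤ) + (j.2.2.choose 2 : ℤ) -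
      ((j.2.1 : ℤ) + 2 * j.2.2)) * qmul3 (p ^ 3) n j.1 j.2.1 j.2.2

lemma trinomialSum_eq_sum_reducedTerm (hp : p ≠ 0) (n : ℕ) (ζ : L) :
    trinomialSum p n (p ^ 2) (ζ * p) (ζ ^ 2) =
      p ^ (2 * n) * ∑ j ∈ triples n, ζ ^ (j.2.1 + 2 * j.2.2) * reducedTerm p n j := by
  rw [trinomialSum, mul_sum]
  refine sum_congr rfl fun ⟨a, b, c⟩ hj => ?_
  have hsum : a + b + c = n := mem_triples.mp hj
  have key : p ^ (2 * a + b + (a.choose 2 + b.choose 2 + c.choose 2)) = p ^ (2 * n) *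
      p ^ ((a.choose 2 : ℤ) + (b.choose 2 : ℤ) + (c.choose 2 : ℤ) - ((b : ℤ) + 2 * c)) := by
    rw [← zpow_natCast, ← zpow_natCast, ← zpow_add₀ hp]
    congr 1
    push_cast
    omega
  simp only [trinomialTerm, reducedTerm]
  linear_combination ζ ^ (b + 2 * c) * qmul3 (p ^ 3) n a b c * key

noncomputable def twistedSummand (p ω : L) (n : ℕ) (j : ℕ × ℕ × ℕ) : L :=
  p ^ ((j.1.choose 2 : ℤ) + (j.2.1.choose 2 : ℤ) + (j.2.2.choose 2 : ℤ) - exponentShift j) *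
    qmul3 (p ^ 3) n j.1 j.2.1 j.2.2 * ω ^ (j.2.1 + 2 * j.2.2)

lemma one_sub_sq_mul_sum_twistedSummand (hω : ω ^ 3 = 1) (n : ℕ) :
    (1 - ω ^ 2) * ∑ j ∈ triples n, twistedSummand p ω n j =
      ∑ j ∈ triples n, ((ω ^ 2) ^ (j.2.1 + 2 * j.2.2) - ω ^ 2 * ω ^ (j.2.1 + 2 * j.2.2)) *
        reducedTerm p n j := by
  -- Carry the summands with `j.2.1 + 2 * j.2.2 ≡ 2 (mod 3)` across the swap of `j.2.1` and `j.2.2`.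
  obtain ⟨E, hE⟩ : ∃ E : ℕ × ℕ × ℕ → L, E = fun j =>
      if ((j.2.1 : ℤ) + 2 * j.2.2) % 3 = 2 then (1 - ω ^ 2) * twistedSummand p ω n j
      else 0 := ⟨_, rfl⟩
  have hswap := sum_triples_comp_involutive n (σ := fun j => (j.1, j.2.2, j.2.1)) (fun _ => rfl)
    (fun _ => by dsimp only; omega) E
  calc (1 - ω ^ 2) * ∑ j ∈ triples n, twistedSummand p ω n j
      = ∑ j ∈ triples n,
          ((1 - ω ^ 2) * twistedSummand p ω n j - E j + E (j.1, j.2.2, j.2.1)) := by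
        rw [sum_add_distrib, hswap, sum_sub_distrib, sub_add_cancel, mul_sum]
    _ = _ := by
        refine sum_congr rfl fun ⟨a, b, c⟩ _ => ?_
        have hpow : ∀ k, (ω ^ 2) ^ k = (ω ^ k) ^ 2 := fun k => pow_right_comm ω 2 k
        have hmod : ∀ {k r : ℕ}, k % 3 = r → ω ^ k = ω ^ r := fun h => by
          rw [pow_eq_pow_mod _ hω, h]
        simp only [hE, twistedSummand, reducedTerm, exponentShift, hpow, qmul3_comm23]
        have : (b + 2 * c) % 3 = 0 ∨ (b + 2 * c) % 3 = 1 ∨ (b + 2 * c) % 3 = 2 := by omega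
        rcases this with h | h | h
        · have h1 : ¬((b : ℤ) + 2 * c) % 3 = 2 := by omega
          have h2 : ¬((c : ℤ) + 2 * b) % 3 = 2 := by omega
          simp only [h1, h2, if_false, hmod h, pow_zero]
          ring
        · have h1 : ¬((b : ℤ) + 2 * c) % 3 = 2 := by omega
          have h2 : ((c : ℤ) + 2 * b) % 3 = 2 := by omega
          simp only [h1, h2, if_false, if_true, hmod h, hmod (show (c + 2 * b) % 3 = 2 by omega)]
          rw [show (a.choose 2 : ℤ) + c.choose 2 + b.choose 2 - (2 * c + b) =
            a.choose 2 + b.choose 2 + c.choose 2 - (b + 2 * c) by ring]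
          linear_combination -ω *
            p ^ ((a.choose 2 : ℤ) + b.choose 2 + c.choose 2 - (b + 2 * c)) *
            qmul3 (p ^ 3) n a b c * hω
        · have h1 : ((b : ℤ) + 2 * c) % 3 = 2 := by omega
          have h2 : ¬((c : ℤ) + 2 * b) % 3 = 2 := by omega
          simp only [h1, h2, if_false, if_true, hmod h]
          ring

theorem sum_twistedSummand_eq_zero (hp : p ≠ 0) (hq : ¬IsOfFinOrder (p ^ 3)) (h3 : (3 : L) ≠ 0)
    (hω : ω ^ 2 + ω + 1 = 0) {m : ℕ} (hm : m ≠ 0) :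
    ∑ j ∈ triples (3 * m), twistedSummand p ω (3 * m) j = 0 := by
  have hω3 : ω ^ 3 = 1 := by linear_combination (ω - 1) * hω
  have hω2 : 1 - ω ^ 2 ≠ 0 := fun h => h3 (by linear_combination (1 - ω) * h + (2 - ω) * hω)
  have twist := trinomialSum_twist hω3 hq hm
  have hsq := trinomialSum_eq_sum_reducedTerm hp (3 * m) (ω ^ 2)
  rw [show (ω ^ 2) ^ 2 = ω by linear_combination ω * hω3] at hsq
  rw [hsq, trinomialSum_eq_sum_reducedTerm hp] at twist
  have : p ^ (2 * (3 * m)) *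
      ((1 - ω ^ 2) * ∑ j ∈ triples (3 * m), twistedSummand p ω (3 * m) j) = 0 := by
    rw [one_sub_sq_mul_sum_twistedSummand hω3]
    simp only [sub_mul, sum_sub_distrib, mul_assoc, ← mul_sum]
    linear_combination twist
  simpa [hp, hω2] using this

end Reduction

end QTrinomial

theorem stmt_7 {K : Type*} [Field K] [CharZero K] (q ω : K)
    (hq : Transcendental ℚ q) (hω : ω ^ 2 + ω + 1 = 0) (m : ℕ) :
    ∑ j ∈ (Finset.range (3 * m + 1) ×ˢ Finset.range (3 * m + 1) ×ˢ
        Finset.range (3 * m + 1)).filter (fun j => j.1 + j.2.1 + j.2.2 = 3 * m),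
      q ^ (((j.1.choose 2 : ℤ) + (j.2.1.choose 2 : ℤ) + (j.2.2.choose 2 : ℤ) -
            (if ((j.2.1 : ℤ) + 2 * j.2.2) % 3 = 2 then 2 * (j.2.1 : ℤ) + j.2.2
             else (j.2.1 : ℤ) + 2 * j.2.2)) / 3) *
        qmul3 q (3 * m) j.1 j.2.1 j.2.2 * ω ^ (j.2.1 + 2 * j.2.2) =
      (if m = 0 then 1 else 0) := by
  rcases eq_or_ne m 0 with rfl | hm
  · change ∑ j ∈ QTrinomial.triples (3 * 0), _ = _
    rw [if_pos rfl, show QTrinomial.triples (3 * 0) = {(0, 0, 0)} by decide, sum_singleton]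
    simp [qmul3, qPoch]
  let φ := algebraMap K (AlgebraicClosure K)
  obtain ⟨p, hp⟩ := IsAlgClosed.exists_pow_nat_eq (φ q) (by norm_num : 0 < 3)
  have hp0 : p ≠ 0 := by
    rintro rfl
    exact hq (φ.injective (by simpa using hp.symm : φ q = φ 0) ▸ isAlgebraic_zero)
  have hpq : ¬IsOfFinOrder (p ^ 3) := by
    rw [hp]
    exact (φ.injective.isOfFinOrder_iff (f := φ.toMonoidHom)).not.mpr hq.not_isOfFinOrder
  rw [if_neg hm]
  apply φ.injective
  rw [map_zero, map_sum, ← QTrinomial.sum_twistedSummand_eq_zero hp0 hpq three_ne_zero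
    (by simpa using congrArg φ hω) hm]
  refine sum_congr rfl fun j hj => ?_
  have hdvd := QTrinomial.three_dvd_sub_exponentShift (j := j) ⟨m, QTrinomial.mem_triples.mp hj⟩
  rw [QTrinomial.exponentShift] at hdvd
  rw [QTrinomial.twistedSummand, QTrinomial.exponentShift, map_mul, map_mul, map_zpow₀, map_pow,
    map_qmul3, ← hp, ← zpow_ofNat, ← zpow_mul, Int.mul_ediv_cancel' hdvd]
end
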